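/- For any θ₁, θ₂ with 0 < θ₁ < θ₂ < π/2 and any positive reals S₁₂, S₁₃, the function θ ↦ min over ω ∈ (π/2 − θ, π/2] of h_θ(ω), where h_θ(ω) = (1/2)·log( (S₁₂ + S₁₃ + sin²ω − 2cos(ω)√(S₁₂S₁₃)) · sin²θ / ((S₁₃+1)(sin²θ − cos²ω)) ), is non-increasing in θ; i.e., min_{ω∈(π/2−θ₂,π/2]} h_{θ₂}(ω) ≤ min_{ω∈(π/2−θ₁,π/2]} h_{θ₁}(ω). -/

import Mathlib

/-!
For fixed `ω`, the argument of the logarithm in `h_θ(ω)` is a positive factor times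
`t / (t - cos² ω)` with `t = sin² θ`, and `t ↦ t / (t - c)` decreases on `(c, ∞)` for `c ≥ 0`.
So increasing `θ` enlarges the interval of admissible `ω` and lowers `h_θ` pointwise on the
old interval; both can only decrease the infimum. The infimum over the larger interval is not
the junk value of an unbounded set, because `sin² ω > cos² θ` there bounds `h_θ` below by
`½ log (cos² θ / (S₁₃ + 1))`.
-/

open Real

/-- The function `h_θ(ω)` from the geometric bound of Wu et al. -/
noncomputable def hFun (S12 S13 θ ω : ℝ) : ℝ :=
  (1/2) * Real.log ((S12 + S13 + Real.sin ω ^ 2 - 2 * Real.cos ω * Real.sqrt (S12 * S13))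
      * Real.sin θ ^ 2 / ((S13 + 1) * (Real.sin θ ^ 2 - Real.cos ω ^ 2)))

open Set

lemma div_sub_le_div_sub {c t₁ t₂ : ℝ} (hc : 0 ≤ c) (h₁ : c < t₁) (h : t₁ ≤ t₂) :
    t₂ / (t₂ - c) ≤ t₁ / (t₁ - c) := by
  rw [div_le_div_iff₀ (by linarith) (by linarith)]
  nlinarith

lemma one_le_div_sub {c t : ℝ} (hc : 0 ≤ c) (ht : c < t) : 1 ≤ t / (t - c) := by
  rw [one_le_div (by linarith)]
  linarith

lemma cos_sq_lt_sin_sq {x y : ℝ} (hx : x ≤ π / 2) (hy : y ≤ π / 2) (hxy : π / 2 < x + y) :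
    cos x ^ 2 < sin y ^ 2 := by
  rw [← sin_pi_div_two_sub]
  have hlt : sin (π / 2 - x) < sin y :=
    sin_lt_sin_of_lt_of_le_pi_div_two (by linarith) hy (by linarith)
  exact pow_lt_pow_left₀ hlt (sin_nonneg_of_nonneg_of_le_pi (by linarith) (by linarith))
    two_ne_zero

lemma two_mul_mul_sqrt_le_add {a b c : ℝ} (ha : 0 ≤ a) (hb : 0 ≤ b) (hc : c ≤ 1) :
    2 * c * √(a * b) ≤ a + b := by
  have hsqrt : √(a * b) = √a * √b := sqrt_mul ha b
  have hamgm : 2 * (√a * √b) ≤ a + b := by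
    nlinarith [sq_nonneg (√a - √b), sq_sqrt ha, sq_sqrt hb]
  nlinarith [sqrt_nonneg (a * b)]

section hFun

variable {S12 S13 θ θ₁ θ₂ ω : ℝ}

noncomputable def hNum (S12 S13 ω : ℝ) : ℝ :=
  S12 + S13 + sin ω ^ 2 - 2 * cos ω * √(S12 * S13)

lemma sin_sq_le_hNum (h12 : 0 ≤ S12) (h13 : 0 ≤ S13) : sin ω ^ 2 ≤ hNum S12 S13 ω := by
  have hcross := two_mul_mul_sqrt_le_add h12 h13 (cos_le_one ω)
  unfold hNum
  linarith

lemma hFun_eq (S12 S13 θ ω : ℝ) :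
    hFun S12 S13 θ ω =
      1 / 2 * log (hNum S12 S13 ω / (S13 + 1) * (sin θ ^ 2 / (sin θ ^ 2 - cos ω ^ 2))) := by
  rw [hFun, hNum, mul_div_mul_comm]

lemma hFun_le_hFun (h12 : 0 ≤ S12) (h13 : 0 ≤ S13) (hθ : θ₁ ≤ θ₂) (hθ₂ : θ₂ ≤ π / 2)
    (hω : ω ∈ Ioc (π / 2 - θ₁) (π / 2)) :
    hFun S12 S13 θ₂ ω ≤ hFun S12 S13 θ₁ ω := by
  obtain ⟨hω₁, hω₂⟩ := hω
  have hcos : cos ω ^ 2 < sin θ₁ ^ 2 := cos_sq_lt_sin_sq hω₂ (by linarith) (by linarith)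
  have hsin : sin θ₁ ^ 2 ≤ sin θ₂ ^ 2 :=
    pow_le_pow_left₀ (sin_nonneg_of_nonneg_of_le_pi (by linarith) (by linarith))
      (sin_le_sin_of_le_of_le_pi_div_two (by linarith) hθ₂ hθ) 2
  have hnum : 0 < hNum S12 S13 ω / (S13 + 1) := by
    have hsinω : cos θ₁ ^ 2 < sin ω ^ 2 := cos_sq_lt_sin_sq (by linarith) hω₂ (by linarith)
    have hle : sin ω ^ 2 ≤ hNum S12 S13 ω := sin_sq_le_hNum h12 h13
    exact div_pos (by nlinarith [sq_nonneg (cos θ₁)]) (by linarith)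
  rw [hFun_eq, hFun_eq]
  gcongr 1 / 2 * log ?_
  · exact mul_pos hnum (div_pos (by nlinarith [sq_nonneg (cos ω)]) (by linarith))
  · exact mul_le_mul_of_nonneg_left (div_sub_le_div_sub (sq_nonneg _) hcos hsin) hnum.le

lemma log_cos_sq_le_hFun (h12 : 0 ≤ S12) (h13 : 0 ≤ S13) (hθ : θ < π / 2)
    (hω : ω ∈ Ioc (π / 2 - θ) (π / 2)) :
    1 / 2 * log (cos θ ^ 2 / (S13 + 1)) ≤ hFun S12 S13 θ ω := by
  obtain ⟨hω₁, hω₂⟩ := hω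
  have hcosθ : 0 < cos θ := cos_pos_of_mem_Ioo ⟨by linarith [pi_pos], hθ⟩
  have hnum : cos θ ^ 2 < hNum S12 S13 ω :=
    (cos_sq_lt_sin_sq hθ.le hω₂ (by linarith)).trans_le (sin_sq_le_hNum h12 h13)
  have hratio : 1 ≤ sin θ ^ 2 / (sin θ ^ 2 - cos ω ^ 2) :=
    one_le_div_sub (sq_nonneg _) (cos_sq_lt_sin_sq hω₂ hθ.le (by linarith))
  rw [hFun_eq]
  gcongr 1 / 2 * log ?_
  calc cos θ ^ 2 / (S13 + 1) ≤ hNum S12 S13 ω / (S13 + 1) := by gcongr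
    _ ≤ hNum S12 S13 ω / (S13 + 1) * (sin θ ^ 2 / (sin θ ^ 2 - cos ω ^ 2)) :=
      le_mul_of_one_le_right (div_nonneg ((sq_nonneg _).trans hnum.le) (by linarith)) hratio

lemma bddBelow_hFun_image (h12 : 0 ≤ S12) (h13 : 0 ≤ S13) (hθ : θ < π / 2) :
    BddBelow (hFun S12 S13 θ '' Ioc (π / 2 - θ) (π / 2)) :=
  ⟨_, forall_mem_image.2 fun _ hω => log_cos_sq_le_hFun h12 h13 hθ hω⟩

end hFun

/-- The function `θ ↦ min_{ω ∈ (π/2−θ, π/2]} h_θ(ω)` is non-increasing in `θ`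
on `(0, π/2)`. -/
theorem stmt_6 (S12 S13 θ₁ θ₂ : ℝ) (h12 : 0 < S12) (h13 : 0 < S13)
    (h1 : 0 < θ₁) (h2 : θ₁ < θ₂) (h3 : θ₂ < Real.pi / 2) :
    sInf ((fun ω => hFun S12 S13 θ₂ ω) '' Set.Ioc (Real.pi / 2 - θ₂) (Real.pi / 2))
      ≤ sInf ((fun ω => hFun S12 S13 θ₁ ω) '' Set.Ioc (Real.pi / 2 - θ₁) (Real.pi / 2)) := by
  have hne : (Ioc (π / 2 - θ₁) (π / 2)).Nonempty := ⟨π / 2, by linarith, le_rfl⟩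
  refine le_csInf (hne.image _) (forall_mem_image.2 fun ω hω => ?_)
  have hω₂ : ω ∈ Ioc (π / 2 - θ₂) (π / 2) := ⟨by linarith [hω.1], hω.2⟩
  calc sInf (hFun S12 S13 θ₂ '' Ioc (π / 2 - θ₂) (π / 2))
      ≤ hFun S12 S13 θ₂ ω := csInf_le (bddBelow_hFun_image h12.le h13.le h3) ⟨ω, hω₂, rfl⟩
    _ ≤ hFun S12 S13 θ₁ ω := hFun_le_hFun h12.le h13.le h2.le h3.le hω
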